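/- Let Ω ⊆ ℝⁿ be open, f ∈ C²(Ω, ℝ), V : ℝ → ℝ^N twice differentiable with |V'(s)| = 1 for all s ∈ f(Ω), and u = V ∘ f. If u satisfies the normal equation |Du|² P^⊥(Du) Δu = 0 on Ω, where P^⊥(Du) is the orthogonal projection onto the orthogonal complement of the range of Du, then |Df(x)|⁴ V''(f(x)) = 0 for all x ∈ Ω; in particular V'' vanishes on f({x ∈ Ω : Df(x) ≠ 0}). -/

import Mathlib

open scoped RealInnerProductSpace BigOperators

noncomputable def frob2 {n N : ℕ} (u : EuclideanSpace ℝ (Fin n) → EuclideanSpace ℝ (Fin N))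
    (x : EuclideanSpace ℝ (Fin n)) : ℝ :=
  ∑ i, ‖fderiv ℝ u x (EuclideanSpace.single i 1)‖ ^ 2

noncomputable def lapl {n N : ℕ} (u : EuclideanSpace ℝ (Fin n) → EuclideanSpace ℝ (Fin N))
    (x : EuclideanSpace ℝ (Fin n)) : EuclideanSpace ℝ (Fin N) :=
  ∑ i, fderiv ℝ (fun y => fderiv ℝ u y (EuclideanSpace.single i 1)) x (EuclideanSpace.single i 1)

noncomputable def perpProj {n N : ℕ}
    (T : EuclideanSpace ℝ (Fin n) →L[ℝ] EuclideanSpace ℝ (Fin N))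
    (w : EuclideanSpace ℝ (Fin N)) : EuclideanSpace ℝ (Fin N) :=
  (Submodule.orthogonalProjection (LinearMap.range (T.toLinearMap))ᗮ w : EuclideanSpace ℝ (Fin N))

noncomputable def inftyLap {n N : ℕ} (u : EuclideanSpace ℝ (Fin n) → EuclideanSpace ℝ (Fin N))
    (x : EuclideanSpace ℝ (Fin n)) : EuclideanSpace ℝ (Fin N) :=
  fderiv ℝ u x (gradient (fun y => (1/2 : ℝ) * frob2 u y) x)
    + frob2 u x • perpProj (fderiv ℝ u x) (lapl u x)

noncomputable def scalarInftyLap {n : ℕ} (f : EuclideanSpace ℝ (Fin n) → ℝ)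
    (x : EuclideanSpace ℝ (Fin n)) : ℝ :=
  ⟪gradient f x, fderiv ℝ (fun y => gradient f y) x (gradient f x)⟫

noncomputable def DuT {n N : ℕ} (u : EuclideanSpace ℝ (Fin n) → EuclideanSpace ℝ (Fin N))
    (x : EuclideanSpace ℝ (Fin n)) (ξ : EuclideanSpace ℝ (Fin N)) : EuclideanSpace ℝ (Fin n) :=
  ContinuousLinearMap.adjoint (fderiv ℝ u x) ξ

/-!
By the chain rule, `Du = Df ⊗ V'(f)` and `Δu = Δf V'(f) + |Df|² V''(f)`. Differentiating
`|V'(f)|² = 1` along `Df` shows `V''(f) ⟂ V'(f)`; where `Df ≠ 0` the range of `Du` is the line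
spanned by `V'(f)`, so `P^⊥(Du) Δu = |Df|² V''(f)` and the normal equation reads
`|Df|⁴ V''(f) = 0`.
-/

open Filter Topology InnerProductSpace

theorem HasDerivAt.comp_hasFDerivAt_smulRight {E F : Type*} [NormedAddCommGroup E]
    [NormedSpace ℝ E] [NormedAddCommGroup F] [NormedSpace ℝ F] {V : ℝ → F} {V' : F}
    {f : E → ℝ} {f' : E →L[ℝ] ℝ} {x : E} (hV : HasDerivAt V V' (f x))
    (hf : HasFDerivAt f f' x) : HasFDerivAt (fun y => V (f y)) (f'.smulRight V') x :=
  (hasDerivAt_iff_hasFDerivAt.mp hV).comp x hf |>.congr_fderiv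
    (ContinuousLinearMap.ext fun v => by simp)

theorem fderiv_comp_eq_smulRight {E F : Type*} [NormedAddCommGroup E]
    [NormedSpace ℝ E] [NormedAddCommGroup F] [NormedSpace ℝ F] {V : ℝ → F}
    {f : E → ℝ} {x : E} (hV : DifferentiableAt ℝ V (f x)) (hf : DifferentiableAt ℝ f x) :
    fderiv ℝ (fun y => V (f y)) x = (fderiv ℝ f x).smulRight (deriv V (f x)) :=
  (hV.hasDerivAt.comp_hasFDerivAt_smulRight hf.hasFDerivAt).fderiv

theorem inner_deriv_eq_zero_of_eventually_norm_comp_eq {E F : Type*}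
    [NormedAddCommGroup E] [NormedSpace ℝ E] [NormedAddCommGroup F] [InnerProductSpace ℝ F]
    {g : ℝ → F} {f : E → ℝ} {x : E} {r : ℝ} (hg : DifferentiableAt ℝ g (f x))
    (hf : DifferentiableAt ℝ f x) (hf' : fderiv ℝ f x ≠ 0)
    (hnorm : ∀ᶠ y in 𝓝 x, ‖g (f y)‖ = r) : ⟪g (f x), deriv g (f x)⟫_ℝ = 0 := by
  have hderiv : HasFDerivAt (fun y => ‖g (f y)‖ ^ 2)
      ((2 * ⟪g (f x), deriv g (f x)⟫_ℝ) • fderiv ℝ f x) x :=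
    hg.hasDerivAt.norm_sq.comp_hasFDerivAt x hf.hasFDerivAt
  have hconst : HasFDerivAt (fun y => ‖g (f y)‖ ^ 2) (0 : E →L[ℝ] ℝ) x :=
    (hasFDerivAt_const (r ^ 2) x).congr_of_eventuallyEq (hnorm.mono fun y hy => by simp only [hy])
  simpa [hf'] using hderiv.unique hconst

section Euclidean

variable {n N : ℕ}

theorem fderiv_apply_single (f : EuclideanSpace ℝ (Fin n) → ℝ) (x : EuclideanSpace ℝ (Fin n))
    (i : Fin n) : fderiv ℝ f x (EuclideanSpace.single i 1) = gradient f x i := by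
  simp [gradient, ← toDual_symm_apply, EuclideanSpace.inner_single_right]

theorem sum_fderiv_apply_single_sq (f : EuclideanSpace ℝ (Fin n) → ℝ)
    (x : EuclideanSpace ℝ (Fin n)) :
    ∑ i, fderiv ℝ f x (EuclideanSpace.single i 1) ^ 2 = ‖gradient f x‖ ^ 2 := by
  simp [fderiv_apply_single, EuclideanSpace.real_norm_sq_eq]

theorem frob2_eq_of_fderiv_eq_smulRight
    {u : EuclideanSpace ℝ (Fin n) → EuclideanSpace ℝ (Fin N)} {f : EuclideanSpace ℝ (Fin n) → ℝ}
    {x : EuclideanSpace ℝ (Fin n)} {c : EuclideanSpace ℝ (Fin N)}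
    (h : fderiv ℝ u x = (fderiv ℝ f x).smulRight c) :
    frob2 u x = ‖gradient f x‖ ^ 2 * ‖c‖ ^ 2 := by
  simp only [frob2, h, ContinuousLinearMap.smulRight_apply, norm_smul, mul_pow, ← Finset.sum_mul,
    Real.norm_eq_abs, sq_abs, sum_fderiv_apply_single_sq]

theorem Filter.EventuallyEq.lapl_eq {u v : EuclideanSpace ℝ (Fin n) → EuclideanSpace ℝ (Fin N)}
    {x : EuclideanSpace ℝ (Fin n)} (h : u =ᶠ[𝓝 x] v) : lapl u x = lapl v x := by
  unfold lapl
  refine Finset.sum_congr rfl fun i _ => ?_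
  have hi : (fun y => fderiv ℝ u y (EuclideanSpace.single i 1)) =ᶠ[𝓝 x]
      fun y => fderiv ℝ v y (EuclideanSpace.single i 1) :=
    (h.fderiv (𝕜 := ℝ)).mono fun y hy => by simp only [hy]
  rw [hi.fderiv_eq]

theorem perpProj_eq_starProjection_of_range_eq
    {T : EuclideanSpace ℝ (Fin n) →L[ℝ] EuclideanSpace ℝ (Fin N)}
    {K : Submodule ℝ (EuclideanSpace ℝ (Fin N))} [K.HasOrthogonalProjection]
    (h : LinearMap.range T.toLinearMap = K) (w : EuclideanSpace ℝ (Fin N)) :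
    perpProj T w = Kᗮ.starProjection w := by
  subst h
  rfl

theorem perpProj_smulRight_smul_add {L : EuclideanSpace ℝ (Fin n) →L[ℝ] ℝ} (hL : L ≠ 0)
    {c w : EuclideanSpace ℝ (Fin N)} (hw : ⟪c, w⟫_ℝ = 0) (a : ℝ) :
    perpProj (L.smulRight c) (a • c + w) = w := by
  have hrange : LinearMap.range (L.smulRight c).toLinearMap = ℝ ∙ c :=
    ContinuousLinearMap.range_smulRight_apply hL c
  have hw' : w ∈ (ℝ ∙ c)ᗮ := Submodule.mem_orthogonal_singleton_iff_inner_right.mpr hw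
  rw [perpProj_eq_starProjection_of_range_eq hrange, map_add, map_smul,
    Submodule.starProjection_orthogonalComplement_singleton_eq_zero, smul_zero, zero_add,
    Submodule.starProjection_eq_self_iff.mpr hw']

theorem lapl_comp {V : ℝ → EuclideanSpace ℝ (Fin N)} {f : EuclideanSpace ℝ (Fin n) → ℝ}
    {x : EuclideanSpace ℝ (Fin n)} (hV : Differentiable ℝ V)
    (hV' : DifferentiableAt ℝ (deriv V) (f x)) (hf : ContDiffAt ℝ 2 f x) :
    lapl (fun y => V (f y)) x =
      (∑ i, fderiv ℝ (fun y => fderiv ℝ f y (EuclideanSpace.single i 1)) x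
        (EuclideanSpace.single i 1)) • deriv V (f x) +
      ‖gradient f x‖ ^ 2 • deriv (deriv V) (f x) := by
  have hfx : DifferentiableAt ℝ f x := hf.differentiableAt two_ne_zero
  have hf_near : ∀ᶠ y in 𝓝 x, DifferentiableAt ℝ f y :=
    (hf.eventually (by simp)).mono fun y hy => hy.differentiableAt two_ne_zero
  have hDf : DifferentiableAt ℝ (fderiv ℝ f) x :=
    (hf.fderiv_right (m := 1) le_rfl).differentiableAt one_ne_zero
  have hV'f : DifferentiableAt ℝ (fun y => deriv V (f y)) x := hV'.comp x hfx
  have hterm : ∀ e, fderiv ℝ (fun y => fderiv ℝ (fun y => V (f y)) y e) x e =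
      fderiv ℝ (fun y => fderiv ℝ f y e) x e • deriv V (f x) +
        fderiv ℝ f x e ^ 2 • deriv (deriv V) (f x) := by
    intro e
    have hev : (fun y => fderiv ℝ (fun y => V (f y)) y e) =ᶠ[𝓝 x]
        fun y => fderiv ℝ f y e • deriv V (f y) :=
      hf_near.mono fun y hy => by
        simp only [fderiv_comp_eq_smulRight (hV _) hy, ContinuousLinearMap.smulRight_apply]
    rw [hev.fderiv_eq, fderiv_fun_smul (hDf.clm_apply (differentiableAt_const e)) hV'f,
      fderiv_comp_eq_smulRight hV' hfx]
    simp only [add_apply, smul_apply, ContinuousLinearMap.smulRight_apply, smul_smul, sq]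
    abel
  simp only [lapl, hterm, Finset.sum_add_distrib, ← Finset.sum_smul, sum_fderiv_apply_single_sq]

end Euclidean

/-- If `u = V ∘ f` with `V` twice differentiable of unit speed on `f(Ω)`, and `u` satisfies the
normal equation `|Du|² P^⊥(Du) Δu = 0` on `Ω`, then `|Df|⁴ V''(f(x)) = 0` on `Ω`; in particular
`V''` vanishes on `f({Df ≠ 0})`. -/
theorem normal_equation_kills_curvature {n N : ℕ}
    (Ω : Set (EuclideanSpace ℝ (Fin n))) (hΩ : IsOpen Ω)
    (f : EuclideanSpace ℝ (Fin n) → ℝ) (hf : ContDiffOn ℝ 2 f Ω)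
    (V : ℝ → EuclideanSpace ℝ (Fin N))
    (hV1 : Differentiable ℝ V) (hV2 : Differentiable ℝ (deriv V))
    (hVunit : ∀ s ∈ f '' Ω, ‖deriv V s‖ = 1)
    (u : EuclideanSpace ℝ (Fin n) → EuclideanSpace ℝ (Fin N))
    (hu : ∀ x ∈ Ω, u x = V (f x))
    (hnormal : ∀ x ∈ Ω, frob2 u x • perpProj (fderiv ℝ u x) (lapl u x) = 0) :
    (∀ x ∈ Ω, ‖gradient f x‖ ^ 4 • deriv (deriv V) (f x) = 0) ∧
    (∀ x ∈ Ω, gradient f x ≠ 0 → deriv (deriv V) (f x) = 0) := by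
  have curvature_eq_zero : ∀ x ∈ Ω, gradient f x ≠ 0 → deriv (deriv V) (f x) = 0 := by
    intro x hx hgrad
    have hΩx : Ω ∈ 𝓝 x := hΩ.mem_nhds hx
    have hux : u =ᶠ[𝓝 x] fun y => V (f y) := eventually_of_mem hΩx hu
    have hfx : ContDiffAt ℝ 2 f x := hf.contDiffAt hΩx
    have hDf : fderiv ℝ f x ≠ 0 := fun h => hgrad (by simp [gradient, h])
    have hDu : fderiv ℝ u x = (fderiv ℝ f x).smulRight (deriv V (f x)) := by
      rw [hux.fderiv_eq, fderiv_comp_eq_smulRight (hV1 _) (hfx.differentiableAt two_ne_zero)]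
    have horth : ⟪deriv V (f x), deriv (deriv V) (f x)⟫_ℝ = 0 :=
      inner_deriv_eq_zero_of_eventually_norm_comp_eq (hV2 _)
        (hfx.differentiableAt two_ne_zero) hDf
        (eventually_of_mem hΩx fun y hy => hVunit _ ⟨y, hy, rfl⟩)
    have hnormal_x := hnormal x hx
    rw [frob2_eq_of_fderiv_eq_smulRight hDu, hVunit _ ⟨x, hx, rfl⟩, hDu, hux.lapl_eq,
      lapl_comp hV1 (hV2 _) hfx, perpProj_smulRight_smul_add hDf
        (by rw [inner_smul_right, horth, mul_zero])] at hnormal_x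
    simpa [hgrad] using hnormal_x
  refine ⟨fun x hx => ?_, curvature_eq_zero⟩
  by_cases hgrad : gradient f x = 0
  · simp [hgrad]
  · simp [curvature_eq_zero x hx hgrad]
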